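/- arXiv:1710.04444 — 2 statements merged into one kernel-verified Lean document; each statement's English description precedes it below -/
import Mathlib

section
/- Let P' ⊆ P be S-subbimodules of a connected graded S-ring T with LH(P) ⊆ ⟨LH(P')⟩. If P is of PBW-type (i.e. LH(⟨P⟩) ⊆ ⟨LH(P)⟩), then P' is also of PBW-type, and moreover ⟨P⟩ = ⟨P'⟩. -/
variable {T : Type*} [Ring T]

/-- Projection onto the degree `n` homogeneous component. -/
noncomputable def projFun (𝒜 : ℕ → AddSubgroup T) [GradedRing 𝒜] (n : ℕ) (x : T) : T :=
  (DirectSum.decompose 𝒜 x n : T)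

lemma projFun_add (𝒜 : ℕ → AddSubgroup T) [GradedRing 𝒜] (n : ℕ) (x y : T) :
    projFun 𝒜 n (x + y) = projFun 𝒜 n x + projFun 𝒜 n y := by
  unfold projFun
  rw [DirectSum.decompose_add, DirectSum.add_apply, AddSubgroup.coe_add]

lemma projFun_neg (𝒜 : ℕ → AddSubgroup T) [GradedRing 𝒜] (n : ℕ) (x : T) :
    projFun 𝒜 n (-x) = - projFun 𝒜 n x := by
  unfold projFun
  rw [DirectSum.decompose_neg, DFinsupp.neg_apply, AddSubgroup.coe_neg]

/-- The `S`-subbimodule `T^{≤ n}` of elements of degree at most `n`. -/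
noncomputable def degLE (𝒜 : ℕ → AddSubgroup T) [GradedRing 𝒜] (n : ℕ) : AddSubgroup T where
  carrier := {x | ∀ m, n < m → projFun 𝒜 m x = 0}
  zero_mem' := by
    intro m hm
    unfold projFun
    rw [DirectSum.decompose_zero, DirectSum.zero_apply, AddSubgroup.coe_zero]
  add_mem' := by
    intro a b ha hb m hm
    rw [projFun_add, ha m hm, hb m hm, add_zero]
  neg_mem' := by
    intro a ha m hm
    rw [projFun_neg, ha m hm, neg_zero]

/-- `y` is the leading homogeneous part of `x`. -/
def IsLH (𝒜 : ℕ → AddSubgroup T) [GradedRing 𝒜] (x y : T) : Prop :=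
  (x = 0 ∧ y = 0) ∨
    ∃ m, y = projFun 𝒜 m x ∧ y ≠ 0 ∧ ∀ k, m < k → projFun 𝒜 k x = 0

/-- `LH(X)`, the set of leading homogeneous parts of elements of `X`. -/
def leadSet (𝒜 : ℕ → AddSubgroup T) [GradedRing 𝒜] (X : Set T) : Set T :=
  {y | ∃ x ∈ X, IsLH 𝒜 x y}

/-- An additive subgroup of `T` which is an `S = T^0`-subbimodule. -/
def IsSubbimodule (𝒜 : ℕ → AddSubgroup T) (X : AddSubgroup T) : Prop :=
  ∀ s ∈ 𝒜 0, ∀ x ∈ X, s * x ∈ X ∧ x * s ∈ X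

/-- `T` is strongly graded: `T^{n+1} = T^1 T^n`. -/
def StronglyGraded (𝒜 : ℕ → AddSubgroup T) : Prop :=
  ∀ n, (𝒜 (n + 1) : Set T) ⊆
    ↑(AddSubgroup.closure {y : T | ∃ a ∈ 𝒜 1, ∃ b ∈ 𝒜 n, y = a * b})

/-!
Induction on the degree. The top component of `u ∈ ⟨P⟩` of degree `n` lies in
`LH(⟨P⟩) ⊆ ⟨LH(P)⟩ ⊆ ⟨LH(P')⟩`. Every degree `n` part of an element of `⟨LH(P')⟩` is the degree
`n` part of an element of `⟨P'⟩ ∩ T^{≤ n}`: it is a sum of terms `aᵢ · LH(q) · bⱼ` with `aᵢ`, `bⱼ`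
homogeneous and `q ∈ P'`, and such a term is the top part of `aᵢ q bⱼ`. Subtracting this lift from
`u` lowers the degree, so `⟨P⟩ = ⟨P'⟩`, whence `LH(⟨P'⟩) = LH(⟨P⟩) ⊆ ⟨LH(P')⟩`.
-/

section LeadingParts

variable (𝒜 : ℕ → AddSubgroup T) [GradedRing 𝒜]

lemma projFun_eq_proj (n : ℕ) : projFun 𝒜 n = GradedRing.proj 𝒜 n :=
  funext fun x => (GradedRing.proj_apply 𝒜 n x).symm

lemma projFun_of_mem_same {n : ℕ} {x : T} (hx : x ∈ 𝒜 n) : projFun 𝒜 n x = x :=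
  DirectSum.decompose_of_mem_same 𝒜 hx

lemma projFun_of_mem_ne {m n : ℕ} {x : T} (hx : x ∈ 𝒜 m) (h : m ≠ n) :
    projFun 𝒜 n x = 0 :=
  DirectSum.decompose_of_mem_ne 𝒜 hx h

lemma projFun_projFun (n : ℕ) (x : T) : projFun 𝒜 n (projFun 𝒜 n x) = projFun 𝒜 n x :=
  projFun_of_mem_same 𝒜 (DirectSum.decompose 𝒜 x n).2

lemma eq_zero_of_forall_projFun_eq_zero {x : T} (h : ∀ n, projFun 𝒜 n x = 0) : x = 0 := by
  apply (DirectSum.decompose 𝒜).injective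
  rw [DirectSum.decompose_zero]
  ext n
  exact h n

lemma exists_mem_degLE (x : T) : ∃ n, x ∈ degLE 𝒜 n := by
  classical
  refine ⟨(DirectSum.decompose 𝒜 x).support.sup id, fun m hm => ?_⟩
  have hm : m ∉ (DirectSum.decompose 𝒜 x).support := fun h =>
    (Finset.le_sup (f := id) h).not_gt hm
  rw [DFinsupp.notMem_support_iff] at hm
  simp [projFun, hm]

lemma projFun_mul_mul_of_mem {a b : T} {i j : ℕ} (ha : a ∈ 𝒜 i) (hb : b ∈ 𝒜 j) (x : T)
    (k : ℕ) : projFun 𝒜 (i + k + j) (a * x * b) = a * projFun 𝒜 k x * b := by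
  unfold projFun
  rw [DirectSum.coe_decompose_mul_of_right_mem_of_le 𝒜 hb (by omega),
    DirectSum.coe_decompose_mul_of_left_mem_of_le 𝒜 ha (by omega),
    show i + k + j - j - i = k by omega]

lemma mul_mul_mem_degLE {a b x : T} {i j m : ℕ} (ha : a ∈ 𝒜 i) (hb : b ∈ 𝒜 j)
    (hx : x ∈ degLE 𝒜 m) : a * x * b ∈ degLE 𝒜 (i + m + j) := by
  intro k hk
  obtain ⟨l, rfl⟩ : ∃ l, k = i + l + j := ⟨k - i - j, by omega⟩
  rw [projFun_mul_mul_of_mem 𝒜 ha hb, hx l (by omega), mul_zero, zero_mul]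

lemma projFun_mul_projFun_mul_mem_image {X : Set T} {a b q : T} {i j m : ℕ} (ha : a ∈ 𝒜 i)
    (hb : b ∈ 𝒜 j) (hq : q ∈ X) (hqm : q ∈ degLE 𝒜 m) (n : ℕ) :
    projFun 𝒜 n (a * projFun 𝒜 m q * b) ∈
      projFun 𝒜 n '' ((TwoSidedIdeal.span X : Set T) ∩ degLE 𝒜 n) := by
  have hmem : a * projFun 𝒜 m q * b ∈ 𝒜 (i + m + j) :=
    SetLike.mul_mem_graded (SetLike.mul_mem_graded ha (DirectSum.decompose 𝒜 q m).2) hb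
  by_cases hn : i + m + j = n
  · subst hn
    refine ⟨a * q * b, ⟨?_, mul_mul_mem_degLE 𝒜 ha hb hqm⟩, ?_⟩
    · exact TwoSidedIdeal.mul_mem_right _ _ _
        (TwoSidedIdeal.mul_mem_left _ _ _ (TwoSidedIdeal.subset_span hq))
    · rw [projFun_mul_mul_of_mem 𝒜 ha hb, projFun_of_mem_same 𝒜 hmem]
  · refine ⟨0, ⟨zero_mem _, zero_mem _⟩, ?_⟩
    rw [projFun_of_mem_ne 𝒜 hmem hn, projFun_eq_proj, map_zero]

lemma projFun_image_span_leadSet_subset (X : Set T) (n : ℕ) :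
    projFun 𝒜 n '' (TwoSidedIdeal.span (leadSet 𝒜 X) : Set T) ⊆
      projFun 𝒜 n '' ((TwoSidedIdeal.span X : Set T) ∩ degLE 𝒜 n) := by
  classical
  let H : AddSubgroup T := (((TwoSidedIdeal.span X).asIdeal.toAddSubgroup ⊓ degLE 𝒜 n).map
    (GradedRing.proj 𝒜 n)).comap (GradedRing.proj 𝒜 n)
  have hH : ∀ u, u ∈ H ↔
      projFun 𝒜 n u ∈ projFun 𝒜 n '' ((TwoSidedIdeal.span X : Set T) ∩ degLE 𝒜 n) := by
    intro u
    simp [H, projFun_eq_proj]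
  rintro _ ⟨u, hu, rfl⟩
  rw [SetLike.mem_coe, TwoSidedIdeal.mem_span_iff_mem_addSubgroup_closure] at hu
  refine (hH u).1 ((AddSubgroup.closure_le H).2 ?_ hu)
  rintro _ ⟨_, ⟨a, -, y, ⟨q, hq, ⟨-, rfl⟩ | ⟨m, rfl, -, hqm⟩⟩, rfl⟩, b, -, rfl⟩
  · simp only [mul_zero, zero_mul, SetLike.mem_coe, zero_mem]
  · show a * projFun 𝒜 m q * b ∈ H
    rw [← DirectSum.sum_support_decompose 𝒜 a, ← DirectSum.sum_support_decompose 𝒜 b,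
      Finset.sum_mul, Finset.sum_mul]
    refine sum_mem fun i _ => ?_
    rw [Finset.mul_sum]
    exact sum_mem fun j _ => (hH _).2 (projFun_mul_projFun_mul_mem_image 𝒜
      (DirectSum.decompose 𝒜 a i).2 (DirectSum.decompose 𝒜 b j).2 hq hqm n)

theorem span_le_span_of_leadSet_span_subset {X Y : Set T} (hYX : Y ⊆ TwoSidedIdeal.span X)
    (hlead : leadSet 𝒜 (TwoSidedIdeal.span X) ⊆ TwoSidedIdeal.span (leadSet 𝒜 Y)) :
    TwoSidedIdeal.span X ≤ TwoSidedIdeal.span Y := by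
  suffices h : ∀ n, ∀ u ∈ TwoSidedIdeal.span X, (∀ k, n ≤ k → projFun 𝒜 k u = 0) →
      u ∈ TwoSidedIdeal.span Y by
    intro u hu
    obtain ⟨n, hn⟩ := exists_mem_degLE 𝒜 u
    exact h (n + 1) u hu hn
  intro n
  induction n with
  | zero =>
    intro u _ hu
    rw [eq_zero_of_forall_projFun_eq_zero 𝒜 fun k => hu k k.zero_le]
    exact zero_mem _
  | succ n ih =>
    intro u hu hun
    have htop : projFun 𝒜 n u ∈ TwoSidedIdeal.span (leadSet 𝒜 Y) := by
      by_cases h0 : projFun 𝒜 n u = 0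
      · rw [h0]
        exact zero_mem _
      · exact hlead ⟨u, hu, .inr ⟨n, rfl, h0, hun⟩⟩
    obtain ⟨v, ⟨hvY, hvn⟩, hv⟩ :=
      projFun_image_span_leadSet_subset 𝒜 Y n ⟨projFun 𝒜 n u, htop, rfl⟩
    rw [projFun_projFun] at hv
    have hdiff : u - v ∈ TwoSidedIdeal.span Y := by
      refine ih (u - v) (sub_mem hu (TwoSidedIdeal.span_le.2 hYX hvY)) fun k hk => ?_
      rw [projFun_eq_proj, map_sub, ← projFun_eq_proj]
      rcases hk.eq_or_lt with rfl | hk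
      · rw [hv, sub_self]
      · rw [hun k hk, hvn k hk, sub_self]
    simpa using add_mem hdiff hvY

end LeadingParts

theorem stmt_5_general (𝒜 : ℕ → AddSubgroup T) [GradedRing 𝒜]
    (P P' : AddSubgroup T)
    (hle : P' ≤ P)
    (hgen : leadSet 𝒜 (P : Set T) ⊆ (TwoSidedIdeal.span (leadSet 𝒜 (P' : Set T)) : Set T))
    (hPBW : leadSet 𝒜 (TwoSidedIdeal.span (P : Set T) : Set T)
      ⊆ (TwoSidedIdeal.span (leadSet 𝒜 (P : Set T)) : Set T)) :
    leadSet 𝒜 (TwoSidedIdeal.span (P' : Set T) : Set T)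
        ⊆ (TwoSidedIdeal.span (leadSet 𝒜 (P' : Set T)) : Set T) ∧
      TwoSidedIdeal.span (P : Set T) = TwoSidedIdeal.span (P' : Set T) := by
  have hlead : leadSet 𝒜 (TwoSidedIdeal.span (P : Set T) : Set T) ⊆
      TwoSidedIdeal.span (leadSet 𝒜 (P' : Set T)) :=
    hPBW.trans (TwoSidedIdeal.span_le.2 hgen)
  have hspan : TwoSidedIdeal.span (P : Set T) = TwoSidedIdeal.span (P' : Set T) :=
    le_antisymm (span_le_span_of_leadSet_span_subset 𝒜
        (fun x hx => TwoSidedIdeal.subset_span (hle hx)) hlead)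
      (TwoSidedIdeal.span_mono hle)
  exact ⟨hspan ▸ hlead, hspan⟩

/-- Proposition 2.1 (2). -/
theorem stmt_5 (𝒜 : ℕ → AddSubgroup T) [GradedRing 𝒜]
    (P P' : AddSubgroup T) (hP : IsSubbimodule 𝒜 P) (hP' : IsSubbimodule 𝒜 P')
    (hle : P' ≤ P)
    (hgen : leadSet 𝒜 (P : Set T) ⊆ (TwoSidedIdeal.span (leadSet 𝒜 (P' : Set T)) : Set T))
    (hPBW : leadSet 𝒜 (TwoSidedIdeal.span (P : Set T) : Set T)
      ⊆ (TwoSidedIdeal.span (leadSet 𝒜 (P : Set T)) : Set T)) :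
    leadSet 𝒜 (TwoSidedIdeal.span (P' : Set T) : Set T)
        ⊆ (TwoSidedIdeal.span (leadSet 𝒜 (P' : Set T)) : Set T) ∧
      TwoSidedIdeal.span (P : Set T) = TwoSidedIdeal.span (P' : Set T) :=
  stmt_5_general 𝒜 P P' hle hgen hPBW
end

section
/- Let I be a graded ideal in a strongly graded connected S-ring T and let R̃ be a graded S-subbimodule generating I. If there exists a graded S-bimodule complement R of R̃ ∩ Ĩ in R̃ (i.e. R ⊕ (R̃ ∩ Ĩ) = R̃), then R is a bimodule of relations for T/I, i.e., R ⊕ Ĩ = I where Ĩ := I T^1 + T^1 I. -/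
/-!
Since `T` is strongly graded, `T^{n+1} I ⊆ T^1 I` and `I T^{n+1} ⊆ I T^1` for every `n`. Hence an
`S`-subbimodule `J` with `Ĩ ⊆ J ⊆ I` is stable under multiplication by every homogeneous element of
`T`, so it is a two-sided ideal. For `J = R̃ + Ĩ`, which contains `R̃`, this gives `I ⊆ R̃ + Ĩ`,
and `R̃ + Ĩ = R + Ĩ` because `R̃ = R + (R̃ ∩ Ĩ)`. The sum `R + Ĩ` is direct since `R ⊆ R̃` and
`R ∩ (R̃ ∩ Ĩ) = 0`.
-/

variable {T : Type*} [Ring T]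

/-- The subgroup `I·T^1 + T^1·I`. -/
noncomputable def tildeI (𝒜 : ℕ → AddSubgroup T) (I : Set T) : AddSubgroup T :=
  AddSubgroup.closure
    ({y : T | ∃ a ∈ I, ∃ b ∈ 𝒜 1, y = a * b} ∪ {y : T | ∃ a ∈ 𝒜 1, ∃ b ∈ I, y = a * b})

section

variable {𝒜 : ℕ → AddSubgroup T}

lemma mul_mem_tildeI_of_mem_of_mem_one {I : Set T} {a b : T} (ha : a ∈ I) (hb : b ∈ 𝒜 1) :
    a * b ∈ tildeI 𝒜 I :=
  AddSubgroup.subset_closure (Or.inl ⟨a, ha, b, hb, rfl⟩)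

lemma mul_mem_tildeI_of_mem_one_of_mem {I : Set T} {a b : T} (ha : a ∈ 𝒜 1) (hb : b ∈ I) :
    a * b ∈ tildeI 𝒜 I :=
  AddSubgroup.subset_closure (Or.inr ⟨a, ha, b, hb, rfl⟩)

lemma mem_of_mem_tildeI (I : TwoSidedIdeal T) {x : T} (hx : x ∈ tildeI 𝒜 (I : Set T)) : x ∈ I := by
  induction hx using AddSubgroup.closure_induction with
  | mem z hz =>
    rcases hz with ⟨a, ha, b, -, rfl⟩ | ⟨a, -, b, hb, rfl⟩
    · exact I.mul_mem_right _ _ ha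
    · exact I.mul_mem_left _ _ hb
  | zero => exact I.zero_mem
  | add a b _ _ ha hb => exact I.add_mem ha hb
  | neg a _ ha => exact I.neg_mem ha

lemma IsSubbimodule.sup {X Y : AddSubgroup T} (hX : IsSubbimodule 𝒜 X) (hY : IsSubbimodule 𝒜 Y) :
    IsSubbimodule 𝒜 (X ⊔ Y) := by
  intro s hs z hz
  obtain ⟨x, hx, y, hy, rfl⟩ := AddSubgroup.mem_sup.1 hz
  rw [mul_add, add_mul]
  exact ⟨add_mem (AddSubgroup.mem_sup_left (hX s hs x hx).1)
      (AddSubgroup.mem_sup_right (hY s hs y hy).1),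
    add_mem (AddSubgroup.mem_sup_left (hX s hs x hx).2)
      (AddSubgroup.mem_sup_right (hY s hs y hy).2)⟩

lemma isSubbimodule_tildeI [SetLike.GradedMonoid 𝒜] (I : TwoSidedIdeal T) :
    IsSubbimodule 𝒜 (tildeI 𝒜 (I : Set T)) := by
  intro s hs v hv
  induction hv using AddSubgroup.closure_induction with
  | mem z hz =>
    rcases hz with ⟨a, ha, b, hb, rfl⟩ | ⟨a, ha, b, hb, rfl⟩
    · refine ⟨?_, ?_⟩
      · rw [← mul_assoc]
        exact mul_mem_tildeI_of_mem_of_mem_one (I.mul_mem_left _ _ ha) hb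
      · rw [mul_assoc]
        exact mul_mem_tildeI_of_mem_of_mem_one ha (SetLike.mul_mem_graded hb hs)
    · refine ⟨?_, ?_⟩
      · rw [← mul_assoc]
        exact mul_mem_tildeI_of_mem_one_of_mem (by simpa using SetLike.mul_mem_graded hs ha) hb
      · rw [mul_assoc]
        exact mul_mem_tildeI_of_mem_one_of_mem ha (I.mul_mem_right _ _ hb)
  | zero => simp only [mul_zero, zero_mul, zero_mem, and_self]
  | add a b _ _ ha hb =>
    rw [mul_add, add_mul]
    exact ⟨add_mem ha.1 hb.1, add_mem ha.2 hb.2⟩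
  | neg a _ ha =>
    rw [mul_neg, neg_mul]
    exact ⟨neg_mem ha.1, neg_mem ha.2⟩

namespace StronglyGraded

variable (hsg : StronglyGraded 𝒜) (I : TwoSidedIdeal T)
include hsg

lemma mul_mem_tildeI_left {n : ℕ} {a x : T} (ha : a ∈ 𝒜 (n + 1)) (hx : x ∈ I) :
    a * x ∈ tildeI 𝒜 (I : Set T) := by
  have : a ∈ (tildeI 𝒜 (I : Set T)).comap (AddMonoidHom.mulRight x) := by
    refine (AddSubgroup.closure_le _).2 ?_ (hsg n ha)
    rintro _ ⟨c, hc, d, -, rfl⟩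
    show c * d * x ∈ tildeI 𝒜 (I : Set T)
    rw [mul_assoc]
    exact mul_mem_tildeI_of_mem_one_of_mem hc (I.mul_mem_left _ _ hx)
  exact this

lemma mul_mem_tildeI_right {n : ℕ} {a x : T} (ha : a ∈ 𝒜 (n + 1)) (hx : x ∈ I) :
    x * a ∈ tildeI 𝒜 (I : Set T) := by
  induction n generalizing a x with
  | zero => exact mul_mem_tildeI_of_mem_of_mem_one hx ha
  | succ n ih =>
    have : a ∈ (tildeI 𝒜 (I : Set T)).comap (AddMonoidHom.mulLeft x) := by
      refine (AddSubgroup.closure_le _).2 ?_ (hsg (n + 1) ha)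
      rintro _ ⟨c, hc, d, hd, rfl⟩
      show x * (c * d) ∈ tildeI 𝒜 (I : Set T)
      rw [← mul_assoc]
      exact ih hd (I.mul_mem_right _ _ hx)
    exact this

variable [GradedRing 𝒜] {J : AddSubgroup T} (hJ : IsSubbimodule 𝒜 J)
  (hIJ : tildeI 𝒜 (I : Set T) ≤ J) (hJI : (J : Set T) ⊆ I)
include hJ hIJ hJI

lemma mul_mem_of_isSubbimodule (t : T) {y : T} (hy : y ∈ J) : t * y ∈ J ∧ y * t ∈ J := by
  induction t using DirectSum.Decomposition.inductionOn 𝒜 with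
  | zero => simp only [zero_mul, mul_zero, zero_mem, and_self]
  | @homogeneous i a =>
    cases i with
    | zero => exact hJ a a.2 y hy
    | succ n =>
      exact ⟨hIJ (hsg.mul_mem_tildeI_left I a.2 (hJI hy)),
        hIJ (hsg.mul_mem_tildeI_right I a.2 (hJI hy))⟩
  | add a b ha hb =>
    rw [add_mul, mul_add]
    exact ⟨add_mem ha.1 hb.1, add_mem ha.2 hb.2⟩

lemma span_subset_of_isSubbimodule {X : Set T} (hXJ : X ⊆ J) :
    (TwoSidedIdeal.span X : Set T) ⊆ J := by
  let K := TwoSidedIdeal.mk' (J : Set T) J.zero_mem J.add_mem J.neg_mem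
    (fun hy => (hsg.mul_mem_of_isSubbimodule I hJ hIJ hJI _ hy).1)
    (fun hy => (hsg.mul_mem_of_isSubbimodule I hJ hIJ hJI _ hy).2)
  have hK : (K : Set T) = J := TwoSidedIdeal.coe_mk' ..
  rw [← hK]
  exact TwoSidedIdeal.span_le.2 (hK ▸ hXJ)

end StronglyGraded

end

theorem stmt_11_general (𝒜 : ℕ → AddSubgroup T) [GradedRing 𝒜] (hsg : StronglyGraded 𝒜)
    (I : TwoSidedIdeal T)
    (Rt : AddSubgroup T) (hRtbi : IsSubbimodule 𝒜 Rt)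
    (hRtI : (Rt : Set T) ⊆ (I : Set T))
    (hgen : TwoSidedIdeal.span (Rt : Set T) = I)
    (R : AddSubgroup T)
    (hcompl1 : R ⊓ (Rt ⊓ tildeI 𝒜 (I : Set T)) = ⊥)
    (hcompl2 : R ⊔ (Rt ⊓ tildeI 𝒜 (I : Set T)) = Rt) :
    R ⊓ tildeI 𝒜 (I : Set T) = ⊥ ∧
      ((R ⊔ tildeI 𝒜 (I : Set T) : AddSubgroup T) : Set T) = (I : Set T) := by
  have hRRt : R ≤ Rt := hcompl2 ▸ le_sup_left
  have hsup : R ⊔ tildeI 𝒜 (I : Set T) = Rt ⊔ tildeI 𝒜 (I : Set T) := by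
    refine le_antisymm (sup_le_sup_right hRRt _) (sup_le ?_ le_sup_right)
    rw [← hcompl2]
    exact sup_le le_sup_left (inf_le_right.trans le_sup_right)
  have hJI : ((Rt ⊔ tildeI 𝒜 (I : Set T) : AddSubgroup T) : Set T) ⊆ I := by
    intro x hx
    obtain ⟨u, hu, v, hv, rfl⟩ := AddSubgroup.mem_sup.1 hx
    exact I.add_mem (hRtI hu) (mem_of_mem_tildeI I hv)
  refine ⟨?_, ?_⟩
  · rw [eq_bot_iff, ← hcompl1]
    exact le_inf inf_le_left (inf_le_inf_right _ hRRt)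
  · rw [hsup]
    refine subset_antisymm hJI ?_
    calc (I : Set T) = TwoSidedIdeal.span (Rt : Set T) := by rw [hgen]
      _ ⊆ _ := hsg.span_subset_of_isSubbimodule I (hRtbi.sup (isSubbimodule_tildeI I))
        le_sup_right hJI (fun _ => AddSubgroup.mem_sup_left)

/-- Proposition 2.12 (2). -/
theorem stmt_11 (𝒜 : ℕ → AddSubgroup T) [GradedRing 𝒜] (hsg : StronglyGraded 𝒜)
    (I : TwoSidedIdeal T) (hIgr : ∀ x ∈ I, ∀ n, projFun 𝒜 n x ∈ I)
    (Rt : AddSubgroup T) (hRtbi : IsSubbimodule 𝒜 Rt)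
    (hRtgr : ∀ x ∈ Rt, ∀ n, projFun 𝒜 n x ∈ Rt)
    (hRtI : (Rt : Set T) ⊆ (I : Set T))
    (hgen : TwoSidedIdeal.span (Rt : Set T) = I)
    (R : AddSubgroup T) (hRbi : IsSubbimodule 𝒜 R)
    (hRgr : ∀ x ∈ R, ∀ n, projFun 𝒜 n x ∈ R)
    (hcompl1 : R ⊓ (Rt ⊓ tildeI 𝒜 (I : Set T)) = ⊥)
    (hcompl2 : R ⊔ (Rt ⊓ tildeI 𝒜 (I : Set T)) = Rt) :
    R ⊓ tildeI 𝒜 (I : Set T) = ⊥ ∧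
      ((R ⊔ tildeI 𝒜 (I : Set T) : AddSubgroup T) : Set T) = (I : Set T) :=
  stmt_11_general 𝒜 hsg I Rt hRtbi hRtI hgen R hcompl1 hcompl2
end
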